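/- arXiv:2503.21697 — 4 statements merged into one kernel-verified Lean document; each statement's English description precedes it below -/
import Mathlib

section
/- For formal series f, g : Σ* → ℚ and any letter a ∈ Σ, the right derivative of the shuffle product satisfies the Leibniz rule ∂ᵣᵃ(f ⧢ g) = (∂ᵣᵃ f) ⧢ g + f ⧢ (∂ᵣᵃ g). -/
/-- Left derivative of a formal series by a letter. -/
def lderiv {A : Type*} (a : A) (f : List A → ℚ) : List A → ℚ := fun w => f (a :: w)

/-- Right derivative of a formal series by a letter. -/
def rderiv {A : Type*} (a : A) (f : List A → ℚ) : List A → ℚ := fun w => f (w ++ [a])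

/-- Shuffle product of formal series. -/
def shuffle {A : Type*} : (List A → ℚ) → (List A → ℚ) → List A → ℚ
  | f, g, [] => f [] * g []
  | f, g, a :: w => shuffle (lderiv a f) g w + shuffle f (lderiv a g) w

/-- Infiltration product of formal series. -/
def infil {A : Type*} : (List A → ℚ) → (List A → ℚ) → List A → ℚ
  | f, g, [] => f [] * g []
  | f, g, a :: w =>
      infil (lderiv a f) g w + infil f (lderiv a g) w + infil (lderiv a f) (lderiv a g) w

/-- A series is commutative if its value depends only on the multiset of letters. -/
def IsCommutativeSeries {A : Type*} (f : List A → ℚ) : Prop :=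
  ∀ u v : List A, u.Perm v → f u = f v


theorem lderiv_rderiv_comm {A : Type*} (a b : A) (f : List A → ℚ) :
    lderiv b (rderiv a f) = rderiv a (lderiv b f) :=
  rfl

/- Induction on `w`: since left and right derivatives commute, the recursion defining the
shuffle product by left derivatives carries the right Leibniz rule from `w` to `b :: w`. -/
theorem shuffle_append_singleton {A : Type*} (a : A) (w : List A) (f g : List A → ℚ) :
    shuffle f g (w ++ [a]) = shuffle (rderiv a f) g w + shuffle f (rderiv a g) w := by
  induction w generalizing f g with
  | nil => simp only [List.nil_append, shuffle, rderiv, lderiv]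
  | cons b w ih =>
    simp only [List.cons_append, shuffle, ih, lderiv_rderiv_comm]
    ring

theorem stmt3_general {A : Type*} (f g : List A → ℚ) (a : A) :
    rderiv a (shuffle f g) =
      fun w => shuffle (rderiv a f) g w + shuffle f (rderiv a g) w :=
  funext fun w => shuffle_append_singleton a w f g

theorem stmt3 {A : Type*} [Fintype A] (f g : List A → ℚ) (a : A) :
    rderiv a (shuffle f g) =
      fun w => shuffle (rderiv a f) g w + shuffle f (rderiv a g) w :=
  stmt3_general f g a
end

section
/- For formal series f, g : Σ* → ℚ and any letter a ∈ Σ, the right derivative of the infiltration product satisfies ∂ᵣᵃ(f ↑ g) = (∂ᵣᵃ f) ↑ g + f ↑ (∂ᵣᵃ g) + (∂ᵣᵃ f) ↑ (∂ᵣᵃ g). -/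
/-! Left and right derivatives commute, so the defining recursion of `infil`, which peels letters
off the left, carries the rule for the last letter from `w` to `b :: w`; for the empty word it is
the expansion `(f ↑ g)(a) = f(a) g(ε) + f(ε) g(a) + f(a) g(a)`. -/

theorem rderiv_lderiv_comm {A : Type*} (a b : A) (f : List A → ℚ) :
    rderiv a (lderiv b f) = lderiv b (rderiv a f) :=
  rfl

theorem infil_append_singleton {A : Type*} (a : A) (w : List A) (f g : List A → ℚ) :
    infil f g (w ++ [a]) = infil (rderiv a f) g w + infil f (rderiv a g) w +
      infil (rderiv a f) (rderiv a g) w := by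
  induction w generalizing f g with
  | nil => simp [infil, rderiv, lderiv]
  | cons b w ih =>
    simp only [List.cons_append, infil, ih, rderiv_lderiv_comm]
    ring

theorem stmt5_general {A : Type*} (f g : List A → ℚ) (a : A) :
    rderiv a (infil f g) =
      fun w => infil (rderiv a f) g w + infil f (rderiv a g) w +
        infil (rderiv a f) (rderiv a g) w :=
  funext fun w => infil_append_singleton a w f g

theorem stmt5 {A : Type*} [Fintype A] (f g : List A → ℚ) (a : A) :
    rderiv a (infil f g) =
      fun w => infil (rderiv a f) g w + infil f (rderiv a g) w +
        infil (rderiv a f) (rderiv a g) w :=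
  stmt5_general f g a
end

section
/- For every letter a ∈ Σ, the map σₐ := id + ∂ₗᵃ is a ring endomorphism of the infiltration algebra of series: σₐ(c·f) = c·σₐ(f), σₐ(f + g) = σₐ(f) + σₐ(g), and σₐ(f ↑ g) = σₐ(f) ↑ σₐ(g). -/
/-! Both σₐ-identities for scalars and sums hold because `∂ₗᵃ` is linear. For the infiltration
product, the defining recursion gives `∂ₗᵃ(f ↑ g) = ∂ₗᵃf ↑ g + f ↑ ∂ₗᵃg + ∂ₗᵃf ↑ ∂ₗᵃg`, so
`σₐ(f ↑ g) = f ↑ g + ∂ₗᵃ(f ↑ g)` is exactly the bilinear expansion of `(f + ∂ₗᵃf) ↑ (g + ∂ₗᵃg)`. -/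

section

variable {A : Type*}

lemma lderiv_smul (a : A) (c : ℚ) (f : List A → ℚ) : lderiv a (c • f) = c • lderiv a f := rfl

lemma lderiv_add (a : A) (f g : List A → ℚ) : lderiv a (f + g) = lderiv a f + lderiv a g := rfl

lemma lderiv_infil (a : A) (f g : List A → ℚ) :
    lderiv a (infil f g) =
      infil (lderiv a f) g + infil f (lderiv a g) + infil (lderiv a f) (lderiv a g) := rfl

lemma infil_add_left (f g h : List A → ℚ) : infil (f + g) h = infil f h + infil g h := by
  funext w
  induction w generalizing f g h with
  | nil => exact add_mul (f []) (g []) (h [])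
  | cons b w ih =>
    simp only [infil, lderiv_add, ih, Pi.add_apply]
    ring

lemma infil_add_right (f g h : List A → ℚ) : infil f (g + h) = infil f g + infil f h := by
  funext w
  induction w generalizing f g h with
  | nil => exact mul_add (f []) (g []) (h [])
  | cons b w ih =>
    simp only [infil, lderiv_add, ih, Pi.add_apply]
    ring

end

theorem stmt6_general {A : Type*} (a : A) :
    (∀ (c : ℚ) (f : List A → ℚ),
        (fun w => (c • f) w + lderiv a (c • f) w) =
          fun w => c • ((fun u => f u + lderiv a f u) w)) ∧
    (∀ f g : List A → ℚ,
        (fun w => (f + g) w + lderiv a (f + g) w) =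
          fun w => (f w + lderiv a f w) + (g w + lderiv a g w)) ∧
    (∀ f g : List A → ℚ,
        (fun w => infil f g w + lderiv a (infil f g) w) =
          infil (fun w => f w + lderiv a f w) (fun w => g w + lderiv a g w)) := by
  refine ⟨fun c f => ?_, fun f g => ?_, fun f g => ?_⟩
  · show c • f + lderiv a (c • f) = c • (f + lderiv a f)
    rw [lderiv_smul, smul_add]
  · show f + g + lderiv a (f + g) = f + lderiv a f + (g + lderiv a g)
    rw [lderiv_add]
    abel
  · show infil f g + lderiv a (infil f g) = infil (f + lderiv a f) (g + lderiv a g)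
    rw [lderiv_infil, infil_add_left, infil_add_right, infil_add_right]
    abel

theorem stmt6 {A : Type*} [Fintype A] (a : A) :
    (∀ (c : ℚ) (f : List A → ℚ),
        (fun w => (c • f) w + lderiv a (c • f) w) =
          fun w => c • ((fun u => f u + lderiv a f u) w)) ∧
    (∀ f g : List A → ℚ,
        (fun w => (f + g) w + lderiv a (f + g) w) =
          fun w => (f w + lderiv a f w) + (g w + lderiv a g w)) ∧
    (∀ f g : List A → ℚ,
        (fun w => infil f g w + lderiv a (infil f g) w) =
          infil (fun w => f w + lderiv a f w) (fun w => g w + lderiv a g w)) :=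
  stmt6_general a
end

section
/- The ring of formal series Σ* → ℚ under addition and shuffle product has no nontrivial zero divisors: if f ⧢ g = 0 then f = 0 or g = 0. -/
/-!
Well-order the alphabet and compare words in shortlex order. A nonzero series `f` has a
shortlex-least word `u₀` in its support, and likewise `v₀` for `g`. Let `m` be the
lexicographically least interleaving of `u₀` and `v₀`. Expanding the shuffle product along the
first letter, every pair `(u, v)` with `f u ≠ 0 ≠ g v` other than `(u₀, v₀)` contributes nothing
at `m`: either `u` or `v` is too short, or all interleavings of `u` and `v` are larger than `m`.
Hence `(f ⧢ g)(m) = c · f(u₀) · g(v₀)`, where `c > 0` is the number of ways of interleaving `u₀`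
and `v₀` into `m`.
-/

section Shuffle

variable {A : Type*}

theorem shuffle_cons_apply (f g : List A → ℚ) (a : A) (w : List A) :
    shuffle f g (a :: w) = shuffle (lderiv a f) g w + shuffle f (lderiv a g) w := by
  rw [shuffle]

theorem shuffle_comm (f g : List A → ℚ) : shuffle f g = shuffle g f := by
  funext w
  induction w generalizing f g with
  | nil => simp only [shuffle, mul_comm]
  | cons a w ih => rw [shuffle_cons_apply, shuffle_cons_apply, ih (lderiv a f), ih f, add_comm]

theorem shuffle_apply_eq_zero_of_length_lt {f g : List A → ℚ} {p q : ℕ}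
    (hf : ∀ u : List A, u.length < p → f u = 0) (hg : ∀ v : List A, v.length < q → g v = 0)
    {w : List A} (hw : w.length < p + q) : shuffle f g w = 0 := by
  induction w generalizing f g p q with
  | nil =>
    rcases Nat.eq_zero_or_pos p with rfl | hp
    · simp [shuffle, hg [] (by simpa using hw)]
    · simp [shuffle, hf [] hp]
  | cons a w ih =>
    have hfa : ∀ u : List A, u.length < p - 1 → lderiv a f u = 0 := fun u hu =>
      hf (a :: u) (by simp only [List.length_cons]; omega)
    have hga : ∀ v : List A, v.length < q - 1 → lderiv a g v = 0 := fun v hv =>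
      hg (a :: v) (by simp only [List.length_cons]; omega)
    simp only [List.length_cons] at hw
    rw [shuffle_cons_apply, ih hfa hg (by omega), ih hf hga (by omega), add_zero]

variable [LinearOrder A]

def minShuffle : List A → List A → List A
  | [], v => v
  | u, [] => u
  | a :: t, b :: s => min (a :: minShuffle t (b :: s)) (b :: minShuffle (a :: t) s)

@[simp] theorem minShuffle_nil_left (v : List A) : minShuffle [] v = v := by
  cases v <;> simp [minShuffle]

@[simp] theorem minShuffle_nil_right (u : List A) : minShuffle u [] = u := by
  cases u <;> simp [minShuffle]

theorem minShuffle_cons_cons (a b : A) (t s : List A) :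
    minShuffle (a :: t) (b :: s) =
      min (a :: minShuffle t (b :: s)) (b :: minShuffle (a :: t) s) := by
  rw [minShuffle]

theorem minShuffle_comm : ∀ u v : List A, minShuffle u v = minShuffle v u
  | [], v => by simp
  | a :: t, [] => by simp
  | a :: t, b :: s => by
    rw [minShuffle_cons_cons, minShuffle_cons_cons, minShuffle_comm t, minShuffle_comm s, min_comm]
termination_by u v => u.length + v.length

theorem minShuffle_le_cons (a : A) (t v : List A) : minShuffle (a :: t) v ≤ a :: minShuffle t v := by
  cases v with
  | nil => simp
  | cons b s => rw [minShuffle_cons_cons]; exact min_le_left _ _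

theorem length_minShuffle : ∀ u v : List A, (minShuffle u v).length = u.length + v.length
  | [], v => by simp
  | a :: t, [] => by simp
  | a :: t, b :: s => by
    rw [minShuffle_cons_cons]
    rcases min_choice (a :: minShuffle t (b :: s)) (b :: minShuffle (a :: t) s) with h | h <;>
      rw [h, List.length_cons, length_minShuffle] <;> simp only [List.length_cons] <;> omega
termination_by u v => u.length + v.length

def VanishesBelow (u₀ : List A) (f : List A → ℚ) : Prop :=
  ∀ u, List.Shortlex (· < ·) u u₀ → f u = 0

theorem VanishesBelow.apply_of_length_lt {u₀ : List A} {f : List A → ℚ} (hf : VanishesBelow u₀ f)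
    {u : List A} (hu : u.length < u₀.length) : f u = 0 :=
  hf u (List.Shortlex.of_length_lt hu)

theorem VanishesBelow.lderiv_apply_of_lt {a b : A} {t : List A} {f : List A → ℚ}
    (hf : VanishesBelow (a :: t) f) (hba : b < a) {u : List A} (hu : u.length < (a :: t).length) :
    lderiv b f u = 0 := by
  simp only [List.length_cons, Nat.lt_succ_iff] at hu
  rcases hu.lt_or_eq with hu | hu
  · exact hf.apply_of_length_lt (by simpa using hu)
  · exact hf _ (List.Shortlex.of_lex (by simpa using hu) (List.Lex.rel hba))

theorem VanishesBelow.lderiv {a : A} {t : List A} {f : List A → ℚ}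
    (hf : VanishesBelow (a :: t) f) : VanishesBelow t (lderiv a f) :=
  fun u hu => hf (a :: u) (List.shortlex_cons_iff.mpr hu)

/-- `a :: minShuffle t v₀` is the least interleaving of `u₀ = a :: t` and `v₀` that starts with
a letter of `u₀`; below it, the first term in the expansion of `shuffle f g (b :: w)` vanishes. -/
theorem shuffle_lderiv_apply_eq_zero {f g : List A → ℚ} {u₀ v₀ : List A}
    (hf : VanishesBelow u₀ f) (hg : VanishesBelow v₀ g) {b : A} {w : List A}
    (hw : w.length + 1 = u₀.length + v₀.length)
    (hlt : ∀ a t, u₀ = a :: t → b :: w < a :: minShuffle t v₀) :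
    shuffle (lderiv b f) g w = 0 := by
  rcases u₀ with _ | ⟨a, t⟩
  · exact shuffle_apply_eq_zero_of_length_lt (p := 0) (fun _ hu => absurd hu (Nat.not_lt_zero _))
      (fun _ hv => hg.apply_of_length_lt hv) (by simp only [List.length_nil] at hw; omega)
  simp only [List.length_cons] at hw
  rcases List.cons_lt_cons_iff.mp (hlt a t rfl) with hba | ⟨rfl, hwt⟩
  · exact shuffle_apply_eq_zero_of_length_lt (p := (a :: t).length) (q := v₀.length)
      (fun _ hu => hf.lderiv_apply_of_lt hba hu) (fun _ hv => hg.apply_of_length_lt hv)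
      (by simp only [List.length_cons]; omega)
  -- Now `b = a` and `w < minShuffle t v₀`; both terms of the expansion of
  -- `shuffle (lderiv a f) g (c :: w')` are again of the form treated here.
  obtain ⟨c, w', rfl⟩ : ∃ c w', w = c :: w' := by
    refine List.exists_cons_of_ne_nil fun hnil => ?_
    subst hnil
    obtain ⟨rfl, rfl⟩ : t = [] ∧ v₀ = [] :=
      ⟨List.eq_nil_of_length_eq_zero (by simp at hw; omega),
        List.eq_nil_of_length_eq_zero (by simp at hw; omega)⟩
    simp at hwt
  have hltf : ∀ a' t', t = a' :: t' → c :: w' < a' :: minShuffle t' v₀ := by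
    rintro a' t' rfl
    exact hwt.trans_le (minShuffle_le_cons a' t' v₀)
  have hltg : ∀ a' s', v₀ = a' :: s' → c :: w' < a' :: minShuffle s' t := by
    rintro a' s' rfl
    rw [minShuffle_comm] at hwt
    exact hwt.trans_le (minShuffle_le_cons a' s' t)
  simp only [List.length_cons] at hw
  rw [shuffle_cons_apply, shuffle_comm (lderiv b f) (lderiv c g),
    shuffle_lderiv_apply_eq_zero hf.lderiv hg (by omega) hltf,
    shuffle_lderiv_apply_eq_zero hg hf.lderiv (by omega) hltg, add_zero]
termination_by w.length

theorem exists_shuffle_apply_minShuffle : ∀ u₀ v₀ : List A, ∃ c : ℚ, 0 < c ∧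
    ∀ f g : List A → ℚ, VanishesBelow u₀ f → VanishesBelow v₀ g →
      shuffle f g (minShuffle u₀ v₀) = c * (f u₀ * g v₀)
  | [], [] => ⟨1, one_pos, fun f g _ _ => by simp [shuffle]⟩
  | [], b :: s => by
    obtain ⟨c, hc, hcs⟩ := exists_shuffle_apply_minShuffle [] s
    refine ⟨c, hc, fun f g hf hg => ?_⟩
    have h₁ : shuffle (lderiv b f) g s = 0 :=
      shuffle_lderiv_apply_eq_zero hf hg (by simp) (by simp)
    have h₂ := hcs f (lderiv b g) hf hg.lderiv
    rw [minShuffle_nil_left] at h₂ ⊢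
    rw [shuffle_cons_apply, h₁, h₂, zero_add]
    rfl
  | a :: t, [] => by
    obtain ⟨c, hc, hct⟩ := exists_shuffle_apply_minShuffle t []
    refine ⟨c, hc, fun f g hf hg => ?_⟩
    have h₁ := hct (lderiv a f) g hf.lderiv hg
    have h₂ : shuffle (lderiv a g) f t = 0 :=
      shuffle_lderiv_apply_eq_zero hg hf (by simp) (by simp)
    rw [minShuffle_nil_right] at h₁ ⊢
    rw [shuffle_cons_apply, shuffle_comm f, h₁, h₂, add_zero]
    rfl
  | a :: t, b :: s => by
    obtain ⟨c₁, hc₁, h₁⟩ := exists_shuffle_apply_minShuffle t (b :: s)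
    obtain ⟨c₂, hc₂, h₂⟩ := exists_shuffle_apply_minShuffle (a :: t) s
    rw [minShuffle_cons_cons]
    rcases lt_trichotomy (a :: minShuffle t (b :: s)) (b :: minShuffle (a :: t) s)
      with hlt | heq | hgt
    · refine ⟨c₁, hc₁, fun f g hf hg => ?_⟩
      have hr : shuffle (lderiv a g) f (minShuffle t (b :: s)) = 0 :=
        shuffle_lderiv_apply_eq_zero hg hf (by simp [length_minShuffle]; omega) ?_
      rw [min_eq_left hlt.le, shuffle_cons_apply, shuffle_comm f, h₁ _ g hf.lderiv hg, hr, add_zero]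
      · rfl
      · rintro _ _ ⟨⟩
        rwa [minShuffle_comm s]
    · obtain ⟨rfl, heq⟩ := List.cons_eq_cons.mp heq
      refine ⟨c₁ + c₂, add_pos hc₁ hc₂, fun f g hf hg => ?_⟩
      rw [← heq, min_self, shuffle_cons_apply, h₁ _ g hf.lderiv hg, heq, h₂ f _ hf hg.lderiv,
        lderiv, lderiv]
      ring
    · refine ⟨c₂, hc₂, fun f g hf hg => ?_⟩
      have hl : shuffle (lderiv b f) g (minShuffle (a :: t) s) = 0 :=
        shuffle_lderiv_apply_eq_zero hf hg (by simp [length_minShuffle]; omega) ?_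
      rw [min_eq_right hgt.le, shuffle_cons_apply, hl, h₂ f _ hf hg.lderiv, zero_add]
      · rfl
      · rintro _ _ ⟨⟩
        exact hgt
termination_by u₀ v₀ => u₀.length + v₀.length

theorem exists_vanishesBelow_apply_ne_zero [WellFoundedLT A] {f : List A → ℚ} (hf : f ≠ 0) :
    ∃ u₀, VanishesBelow u₀ f ∧ f u₀ ≠ 0 := by
  obtain ⟨u₀, hu₀, hmin⟩ :=
    (List.Shortlex.wf wellFounded_lt).has_min {u | f u ≠ 0} (Function.ne_iff.mp hf)
  exact ⟨u₀, fun u hu => by_contra fun h => hmin u h hu, hu₀⟩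

end Shuffle

theorem stmt9_general {A : Type*} (f g : List A → ℚ)
    (h : shuffle f g = 0) : f = 0 ∨ g = 0 := by
  obtain ⟨_, _⟩ := exists_wellFoundedLT A
  by_contra! hfg
  obtain ⟨u₀, hu₀, hfu₀⟩ := exists_vanishesBelow_apply_ne_zero hfg.1
  obtain ⟨v₀, hv₀, hgv₀⟩ := exists_vanishesBelow_apply_ne_zero hfg.2
  obtain ⟨c, hc, hval⟩ := exists_shuffle_apply_minShuffle u₀ v₀
  have hzero := hval f g hu₀ hv₀
  rw [h] at hzero
  exact mul_ne_zero hc.ne' (mul_ne_zero hfu₀ hgv₀) hzero.symm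

theorem stmt9 {A : Type*} [Fintype A] (f g : List A → ℚ)
    (h : shuffle f g = 0) : f = 0 ∨ g = 0 :=
  stmt9_general f g h
end
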